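/- arXiv:1503.08535 — 4 statements merged into one kernel-verified Lean document; each statement's English description precedes it below -/
import Mathlib

section
/- (Additive property of the negative binomial, Theorem 1, finite-family case.) Let I be a nonempty finite index set, p ∈ (0,1), and r : I → ℝ with r i > 0 for all i. Then for every n ∈ ℕ, summing over all functions g : I → ℕ with Σ_{i∈I} g i = n, one has Σ_g ∏_{i∈I} f_{r i, p}(g i) = f_{Σ_{i∈I} r i, p}(n). That is, if the X_i are independent negative binomial with parameters r_i and a common p, then Σ X_i is negative binomial with parameters Σ r_i and p. -/
/-!
`f_{r,p}(n)` is the `n`-th coefficient of `((1 - p) / (1 - p X)) ^ r`: the quotient of Gamma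
values is the rising factorial `r (r + 1) ⋯ (r + n - 1) / n!`, i.e. `multichoose r n`, which is
`(-1)ⁿ (-r choose n)`. These power series are multiplicative in `r` (binomial series plus
`(1 - p) ^ (r + s) = (1 - p) ^ r (1 - p) ^ s`), and the coefficient of a product over `I` is the
convolution over all `g : I → ℕ` with `∑ i, g i = n`.
-/

/-- The negative binomial pmf with real shape `r > 0` and success parameter `p ∈ (0,1)`:
`f_{r,p}(n) = Γ(n+r) / (n! · Γ(r)) · pⁿ · (1−p)ʳ`. -/
noncomputable def nbPMF (r p : ℝ) (n : ℕ) : ℝ :=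
  Real.Gamma ((n : ℝ) + r) / ((n.factorial : ℝ) * Real.Gamma r) * p ^ n * (1 - p) ^ r

open Finset PowerSeries

theorem Real.Gamma_natCast_add_eq_ascPochhammer_mul {r : ℝ} (hr : 0 < r) (n : ℕ) :
    Real.Gamma (n + r) = (ascPochhammer ℝ n).eval r * Real.Gamma r := by
  induction n with
  | zero => simp
  | succ n ih =>
    rw [Nat.cast_succ, add_right_comm, Real.Gamma_add_one (by positivity), ih,
      ascPochhammer_succ_eval]
    ring

theorem Real.multichoose_eq_ascPochhammer_div (r : ℝ) (n : ℕ) :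
    Ring.multichoose r n = (ascPochhammer ℝ n).eval r / n.factorial := by
  rw [eq_div_iff (by positivity), mul_comm, ← nsmul_eq_mul,
    Ring.factorial_nsmul_multichoose_eq_ascPochhammer, Polynomial.ascPochhammer_smeval_eq_eval]

theorem nbPMF_eq_multichoose {r : ℝ} (hr : 0 < r) (p : ℝ) (n : ℕ) :
    nbPMF r p n = Ring.multichoose r n * p ^ n * (1 - p) ^ r := by
  rw [nbPMF, Real.multichoose_eq_ascPochhammer_div, Real.Gamma_natCast_add_eq_ascPochhammer_mul hr,
    mul_div_mul_right _ _ (Real.Gamma_pos_of_pos hr).ne']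

/-- The probability generating function `((1 - p) / (1 - p X)) ^ r` of the negative binomial
distribution. -/
noncomputable def negBinomialPGF (r p : ℝ) : ℝ⟦X⟧ :=
  C ((1 - p) ^ r) * rescale (-p) (binomialSeries ℝ (-r))

theorem coeff_negBinomialPGF {r : ℝ} (hr : 0 < r) (p : ℝ) (n : ℕ) :
    coeff n (negBinomialPGF r p) = nbPMF r p n := by
  have hsign : (-1 : ℝ) ^ n * (-1) ^ n = 1 := by rw [← mul_pow]; norm_num
  rw [negBinomialPGF, coeff_C_mul, coeff_rescale, binomialSeries_coeff, Ring.choose_neg',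
    nbPMF_eq_multichoose hr, neg_pow, Units.smul_def, Int.coe_negOnePow_natCast]
  simp only [zsmul_eq_mul, smul_eq_mul, mul_one, Int.cast_pow, Int.cast_neg, Int.cast_one]
  linear_combination ((1 - p) ^ r * p ^ n * Ring.multichoose r n) * hsign

theorem negBinomialPGF_add {p : ℝ} (hp : p < 1) (r s : ℝ) :
    negBinomialPGF (r + s) p = negBinomialPGF r p * negBinomialPGF s p := by
  rw [negBinomialPGF, neg_add, binomialSeries_add, map_mul, Real.rpow_add (by linarith), map_mul]
  simp only [negBinomialPGF]
  ring

theorem negBinomialPGF_zero (p : ℝ) : negBinomialPGF 0 p = 1 := by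
  simp [negBinomialPGF]

theorem negBinomialPGF_sum {ι : Type*} {p : ℝ} (hp : p < 1) (s : Finset ι) (r : ι → ℝ) :
    negBinomialPGF (∑ i ∈ s, r i) p = ∏ i ∈ s, negBinomialPGF (r i) p := by
  induction s using Finset.cons_induction with
  | empty => exact negBinomialPGF_zero p
  | cons i s hi ih => rw [sum_cons, prod_cons, negBinomialPGF_add hp, ih]

theorem PowerSeries.coeff_prod_eq_sum_piFinset {ι R : Type*} [Fintype ι] [DecidableEq ι]
    [CommSemiring R] (f : ι → R⟦X⟧) (n : ℕ) :
    coeff n (∏ i, f i) = ∑ g ∈ (Fintype.piFinset fun _ : ι => range (n + 1)).filter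
        (fun g => ∑ i, g i = n), ∏ i, coeff (g i) (f i) := by
  rw [coeff_prod]
  refine sum_equiv Finsupp.equivFunOnFinite (fun l => ?_) (fun _ _ => rfl)
  simp only [mem_finsuppAntidiag, subset_univ, and_true, mem_filter, Fintype.mem_piFinset,
    mem_range, Finsupp.equivFunOnFinite_apply, iff_and_self, Nat.lt_succ_iff]
  rintro rfl i
  exact single_le_sum (fun j _ => Nat.zero_le (l j)) (mem_univ i)

/-- Additive property of the negative binomial distribution (finite-family case):
summing over all functions `g : I → ℕ` with `∑ i, g i = n` (all such functions satisfy
`g i ≤ n`, hence lie in the pi-finset of `Finset.range (n+1)`), the convolution of the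
pmfs `f_{r i, p}` equals `f_{∑ i, r i, p}`. -/
theorem negBinomial_sum_of_convolution (I : Type*) [Fintype I] [DecidableEq I] [Nonempty I]
    (p : ℝ) (hp : p ∈ Set.Ioo (0:ℝ) 1) (r : I → ℝ) (hr : ∀ i, 0 < r i) (n : ℕ) :
    ∑ g ∈ (Fintype.piFinset fun _ : I => Finset.range (n + 1)).filter
        (fun g => ∑ i, g i = n),
      ∏ i, nbPMF (r i) p (g i) = nbPMF (∑ i, r i) p n := by
  have hR : 0 < ∑ i, r i := sum_pos (fun i _ => hr i) univ_nonempty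
  calc _ = ∑ g ∈ (Fintype.piFinset fun _ : I => range (n + 1)).filter (fun g => ∑ i, g i = n),
        ∏ i, coeff (g i) (negBinomialPGF (r i) p) := by simp only [coeff_negBinomialPGF (hr _)]
    _ = coeff n (∏ i, negBinomialPGF (r i) p) := (coeff_prod_eq_sum_piFinset _ n).symm
    _ = nbPMF (∑ i, r i) p n := by rw [← negBinomialPGF_sum hp.2, coeff_negBinomialPGF hR]
end

section
/- (Normalization of the negative binomial pmf with real shape parameter.) For every real r > 0 and p ∈ (0,1), the series Σ_{n=0}^{∞} f_{r,p}(n) converges and equals 1, i.e. Σ_{n=0}^{∞} Γ(n+r) / (n! · Γ(r)) · pⁿ · (1−p)ʳ = 1. -/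
open Polynomial

namespace Real

theorem Gamma_add_nat_eq_ascPochhammer_mul {r : ℝ} (hr : ∀ k : ℕ, r ≠ -k) (n : ℕ) :
    Gamma (r + n) = (ascPochhammer ℝ n).eval r * Gamma r := by
  induction n with
  | zero => simp
  | succ n ih =>
    have hrn : r + n ≠ 0 := fun h => hr n (by linarith)
    rw [Nat.cast_succ, ← add_assoc, Gamma_add_one hrn, ih, ascPochhammer_succ_right]
    simp only [eval_mul, eval_add, eval_X, eval_natCast]
    ring

theorem multichoose_eq_Gamma_div {r : ℝ} (hr : ∀ k : ℕ, r ≠ -k) (n : ℕ) :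
    Ring.multichoose r n = Gamma (r + n) / (n.factorial * Gamma r) := by
  have hfact := Ring.factorial_nsmul_multichoose_eq_ascPochhammer r n
  rw [ascPochhammer_smeval_eq_eval, nsmul_eq_mul] at hfact
  rw [Gamma_add_nat_eq_ascPochhammer_mul hr, ← hfact]
  field_simp [Gamma_ne_zero hr, Nat.factorial_ne_zero]

theorem hasSum_multichoose_mul_pow (a : ℝ) {x : ℝ} (hx : |x| < 1) :
    HasSum (fun n => Ring.multichoose a n * x ^ n) (1 / (1 - x) ^ a) := by
  have hx' : x ∈ Metric.eball (0 : ℝ) 1 := by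
    simpa [Metric.mem_eball, edist_dist] using hx
  simpa [Ring.multichoose_eq, FormalMultilinearSeries.ofScalars_apply_eq, mul_comm] using
    (one_div_one_sub_rpow_hasFPowerSeriesOnBall_zero a).hasSum hx'

end Real

/-- Normalization of the negative binomial pmf with real shape parameter:
`Σ_{n=0}^{∞} f_{r,p}(n)` converges and equals `1`. -/
theorem negBinomial_hasSum_one (r p : ℝ) (hr : 0 < r) (hp : p ∈ Set.Ioo (0:ℝ) 1) :
    HasSum (fun n : ℕ => nbPMF r p n) 1 := by
  obtain ⟨hp0, hp1⟩ := hp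
  have hr' : ∀ k : ℕ, r ≠ -k := fun k h => by linarith [(k.cast_nonneg : (0:ℝ) ≤ k)]
  have hq : 0 < 1 - p := by linarith
  have hsum := (Real.hasSum_multichoose_mul_pow r (abs_lt.2 ⟨by linarith, hp1⟩)).mul_right
    ((1 - p) ^ r)
  rw [one_div_mul_cancel (Real.rpow_pos_of_pos hq r).ne'] at hsum
  refine hsum.congr_fun fun n => ?_
  rw [nbPMF, Real.multichoose_eq_Gamma_div hr', add_comm]
end

section
/- (Closed form of the convolution powers of the logarithmic pmf.) Let p ∈ (0,1) and write L = −log(1−p) > 0. For all j, x ∈ ℕ, the j-fold convolution power of the logarithmic pmf satisfies g_p^{*j}(x) = j! · c(x,j) · pˣ / (x! · Lʲ), where c(x,j) is the unsigned Stirling number of the first kind. -/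
/-- The logarithmic pmf with parameter `p ∈ (0,1)`:
`g_p(k) = −p^k / (k · log(1−p))` for `k ≥ 1` and `g_p(0) = 0`. -/
noncomputable def logPMF (p : ℝ) (k : ℕ) : ℝ :=
  if k = 0 then 0 else -(p ^ k) / ((k : ℝ) * Real.log (1 - p))

/-- The `j`-fold convolution power of the logarithmic pmf:
`g_p^{*0}(x) = 1` if `x = 0` and `0` otherwise, and
`g_p^{*(j+1)}(x) = Σ_{k=0}^{x} g_p^{*j}(k) · g_p(x−k)`. -/
noncomputable def logConvPow (p : ℝ) : ℕ → ℕ → ℝ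
  | 0, x => if x = 0 then 1 else 0
  | j + 1, x => ∑ k ∈ Finset.range (x + 1), logConvPow p j k * logPMF p (x - k)

/-!
The generating function of `g_p` is `G = -log(1 - pX) / L`, so `g_p^{*j}(x)` is the coefficient
of `Xˣ` in `Gʲ`, namely `pˣ / Lʲ` times the coefficient of `Xˣ` in `ℓʲ`, where `ℓ = -log(1 - X)`.
From `ℓ' · (1 - X) = 1` one gets `(ℓʲ⁺¹)' · (1 - X) = (j + 1) ℓʲ`, which says that `n! [Xⁿ] ℓʲ / j!`
satisfies the Stirling recurrence `c(n+1, j+1) = n c(n, j+1) + c(n, j)`.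
-/

theorem ascPochhammer_nat_coeff_eq_stirlingFirst (n k : ℕ) :
    (ascPochhammer ℕ n).coeff k = Nat.stirlingFirst n k := by
  induction n generalizing k with
  | zero => cases k <;> simp [Polynomial.coeff_one]
  | succ n ih =>
    rw [ascPochhammer_succ_right, mul_add, Polynomial.coeff_add, ← Polynomial.C_eq_natCast,
      Polynomial.coeff_mul_C]
    cases k with
    | zero => cases n <;> simp [ih]
    | succ k => rw [Polynomial.coeff_mul_X, ih, ih, Nat.stirlingFirst_succ_succ, Nat.cast_id]; ring

namespace PowerSeries

theorem coeff_derivative_mul_X {R : Type*} [CommSemiring R] (f : R⟦X⟧) (n : ℕ) :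
    coeff n (d⁄dX R f * X) = n * coeff n f := by
  cases n with
  | zero => simp
  | succ n => rw [coeff_succ_mul_X, coeff_derivative, mul_comm, Nat.cast_add_one]

section NegLogOneSub

variable (K : Type*) [Field K]

/-- `-log(1 - X) = ∑_{n ≥ 1} Xⁿ / n`; the constant term is `(0 : K)⁻¹ = 0`. -/
noncomputable def negLogOneSub : K⟦X⟧ :=
  mk fun n => (n : K)⁻¹

variable {K}

theorem coeff_negLogOneSub (n : ℕ) : coeff n (negLogOneSub K) = (n : K)⁻¹ :=
  coeff_mk _ _

theorem derivative_negLogOneSub_mul_one_sub_X [CharZero K] :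
    d⁄dX K (negLogOneSub K) * (1 - X) = 1 := by
  ext n
  rw [mul_sub, mul_one, map_sub, coeff_derivative, coeff_negLogOneSub, coeff_one]
  cases n with
  | zero => simp
  | succ n =>
    have h₁ : (n + 1 : K) ≠ 0 := Nat.cast_add_one_ne_zero n
    have h₂ : (n + 1 + 1 : K) ≠ 0 := by exact_mod_cast (n + 1).succ_ne_zero
    rw [coeff_succ_mul_X, coeff_derivative, coeff_negLogOneSub]
    push_cast
    simp [h₁, h₂]

theorem coeff_succ_negLogOneSub_pow_succ [CharZero K] (n j : ℕ) :
    (n + 1 : K) * coeff (n + 1) (negLogOneSub K ^ (j + 1)) =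
      n * coeff n (negLogOneSub K ^ (j + 1)) + (j + 1) * coeff n (negLogOneSub K ^ j) := by
  have h := congrArg (coeff n) <| calc
    d⁄dX K (negLogOneSub K ^ (j + 1)) * (1 - X)
      = (j + 1 : K) • (negLogOneSub K ^ j * (d⁄dX K (negLogOneSub K) * (1 - X))) := by
        rw [Derivation.leibniz_pow, add_tsub_cancel_right, smul_mul_assoc, smul_mul_assoc,
          smul_eq_mul, ← Nat.cast_smul_eq_nsmul K]
        push_cast; rfl
    _ = (j + 1 : K) • negLogOneSub K ^ j := by
        rw [derivative_negLogOneSub_mul_one_sub_X, mul_one]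
  rw [mul_sub, mul_one, map_sub, coeff_derivative, coeff_derivative_mul_X, coeff_smul,
    smul_eq_mul] at h
  linear_combination h

open Nat in
theorem factorial_mul_coeff_negLogOneSub_pow [CharZero K] (n j : ℕ) :
    (n ! : K) * coeff n (negLogOneSub K ^ j) = j ! * stirlingFirst n j := by
  induction n generalizing j with
  | zero =>
    rw [coeff_zero_eq_constantCoeff_apply, map_pow, ← coeff_zero_eq_constantCoeff_apply,
      coeff_negLogOneSub]
    cases j <;> simp
  | succ n ih =>
    cases j with
    | zero => simp [coeff_one]
    | succ j =>
      calc ((n + 1) ! : K) * coeff (n + 1) (negLogOneSub K ^ (j + 1))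
          = n ! * ((n + 1) * coeff (n + 1) (negLogOneSub K ^ (j + 1))) := by
            push_cast [factorial_succ]; ring
        _ = n * (n ! * coeff n (negLogOneSub K ^ (j + 1))) +
              (j + 1) * (n ! * coeff n (negLogOneSub K ^ j)) := by
            rw [coeff_succ_negLogOneSub_pow_succ]; ring
        _ = (j + 1) ! * stirlingFirst (n + 1) (j + 1) := by
            rw [ih, ih, stirlingFirst_succ_succ, factorial_succ]; push_cast; ring

end NegLogOneSub

end PowerSeries

open PowerSeries

noncomputable def logPGF (p : ℝ) : ℝ⟦X⟧ :=
  C (-Real.log (1 - p))⁻¹ * rescale p (negLogOneSub ℝ)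

theorem coeff_logPGF (p : ℝ) (k : ℕ) : coeff k (logPGF p) = logPMF p k := by
  rw [logPGF, coeff_C_mul, coeff_rescale, coeff_negLogOneSub, logPMF]
  split_ifs with hk
  · simp [hk]
  · field_simp

theorem logConvPow_eq_coeff_logPGF_pow (p : ℝ) (j x : ℕ) :
    logConvPow p j x = coeff x (logPGF p ^ j) := by
  induction j generalizing x with
  | zero => rw [logConvPow, pow_zero, coeff_one]
  | succ j ih =>
    simp only [logConvPow, ih, ← coeff_logPGF, pow_succ, coeff_mul,
      Finset.Nat.sum_antidiagonal_eq_sum_range_succ_mk]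

theorem logConvPow_eq_stirling_general (p : ℝ) (j x : ℕ) :
    logConvPow p j x =
      (j.factorial : ℝ) * ((ascPochhammer ℕ x).coeff j : ℝ) * p ^ x /
        ((x.factorial : ℝ) * (-Real.log (1 - p)) ^ j) := by
  rw [logConvPow_eq_coeff_logPGF_pow, logPGF, mul_pow, ← map_pow, ← map_pow, coeff_C_mul,
    coeff_rescale, ascPochhammer_nat_coeff_eq_stirlingFirst,
    ← factorial_mul_coeff_negLogOneSub_pow, inv_pow]
  field_simp

/-- Closed form of the convolution powers of the logarithmic pmf, with `L = −log(1−p)`: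
`g_p^{*j}(x) = j! · c(x,j) · pˣ / (x! · Lʲ)`, where `c(x,j)` (the unsigned Stirling
number of the first kind) is the coefficient of degree `j` of `ascPochhammer ℕ x`. -/
theorem logConvPow_eq_stirling (p : ℝ) (hp : p ∈ Set.Ioo (0:ℝ) 1) (j x : ℕ) :
    logConvPow p j x =
      (j.factorial : ℝ) * ((ascPochhammer ℕ x).coeff j : ℝ) * p ^ x /
        ((x.factorial : ℝ) * (-Real.log (1 - p)) ^ j) :=
  logConvPow_eq_stirling_general p j x
end

section
/- (Theorem 2, part 1: compound-Poisson representation of the negative binomial, pmf form.) Let r > 0 be real, p ∈ (0,1), and set λ = −r·log(1−p) > 0. Then for every x ∈ ℕ: Σ_{j=0}^{x} (e^{−λ} · λʲ / j!) · g_p^{*j}(x) = f_{r,p}(x). That is, if l ∼ Poisson(λ) and X is the sum of l i.i.d. Log(p) variables, then X ∼ NB(r,p). -/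
open Finset PowerSeries

namespace PowerSeries

variable {R : Type*} [CommSemiring R]

theorem coeff_pow_eq_zero_of_lt {f : R⟦X⟧} (hf : constantCoeff f = 0) {n j : ℕ} (h : n < j) :
    coeff n (f ^ j) = 0 :=
  X_pow_dvd_iff.mp (pow_dvd_pow_of_dvd (X_dvd_iff.mpr hf) j) n h

theorem coeff_X_mul_derivative (f : R⟦X⟧) (n : ℕ) :
    coeff n (X * d⁄dX R f) = n * coeff n f := by
  cases n with
  | zero => simp
  | succ n => rw [coeff_succ_X_mul, coeff_derivative, Nat.cast_succ, mul_comm]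

end PowerSeries

theorem eq_of_succ_mul_recurrence {K : Type*} [Field K] [CharZero K] {a b q : ℕ → K}
    (h0 : a 0 = b 0)
    (ha : ∀ n : ℕ, (n + 1) * a (n + 1) = q n * a n)
    (hb : ∀ n : ℕ, (n + 1) * b (n + 1) = q n * b n) : a = b := by
  funext n
  induction n with
  | zero => exact h0
  | succ n ih =>
    refine mul_left_cancel₀ n.cast_add_one_ne_zero ?_
    rw [ha, hb, ih]

noncomputable def poissonWeight (lam : ℝ) (j : ℕ) : ℝ :=
  Real.exp (-lam) * lam ^ j / (j.factorial : ℝ)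

theorem succ_mul_poissonWeight_succ (lam : ℝ) (j : ℕ) :
    (j + 1) * poissonWeight lam (j + 1) = lam * poissonWeight lam j := by
  simp only [poissonWeight, Nat.factorial_succ, Nat.cast_mul, Nat.cast_succ, pow_succ]
  field_simp

noncomputable def compoundPoissonTrunc (lam : ℝ) (f : ℝ⟦X⟧) (N : ℕ) : ℝ⟦X⟧ :=
  ∑ j ∈ range N, poissonWeight lam j • f ^ j

theorem derivative_compoundPoissonTrunc_succ (lam : ℝ) (f : ℝ⟦X⟧) (N : ℕ) :
    d⁄dX ℝ (compoundPoissonTrunc lam f (N + 1)) =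
      lam • (compoundPoissonTrunc lam f N * d⁄dX ℝ f) := by
  rw [compoundPoissonTrunc, sum_range_succ', pow_zero, map_add, Derivation.map_smul,
    Derivation.map_one_eq_zero, smul_zero, add_zero, map_sum, compoundPoissonTrunc, sum_mul,
    smul_sum]
  refine sum_congr rfl fun j _ => ?_
  rw [Derivation.map_smul, derivative_pow, add_tsub_cancel_right, smul_mul_assoc, smul_smul,
    mul_assoc, ← nsmul_eq_mul, ← Nat.cast_smul_eq_nsmul ℝ, smul_smul, mul_comm, Nat.cast_succ,
    succ_mul_poissonWeight_succ]

theorem coeff_compoundPoissonTrunc_of_lt (lam : ℝ) {f : ℝ⟦X⟧} (hf : constantCoeff f = 0)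
    {n N : ℕ} (h : n < N) :
    coeff n (compoundPoissonTrunc lam f N) = coeff n (compoundPoissonTrunc lam f (n + 1)) := by
  simp only [compoundPoissonTrunc, map_sum, coeff_smul]
  refine (sum_subset (range_subset_range.mpr h) fun j _ hj => ?_).symm
  rw [coeff_pow_eq_zero_of_lt hf (by simpa using hj), smul_zero]

noncomputable def compoundPoissonCoeff (lam : ℝ) (f : ℝ⟦X⟧) (n : ℕ) : ℝ :=
  coeff n (compoundPoissonTrunc lam f (n + 1))

theorem compoundPoissonCoeff_zero (lam : ℝ) (f : ℝ⟦X⟧) :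
    compoundPoissonCoeff lam f 0 = Real.exp (-lam) := by
  simp [compoundPoissonCoeff, compoundPoissonTrunc, poissonWeight]

theorem compoundPoissonCoeff_succ {lam q b : ℝ} {f : ℝ⟦X⟧} (hf : constantCoeff f = 0)
    (hf' : (1 - C q * X) * d⁄dX ℝ f = C b) (n : ℕ) :
    (n + 1) * compoundPoissonCoeff lam f (n + 1) =
      (q * n + lam * b) * compoundPoissonCoeff lam f n := by
  have hD : (1 - C q * X) * d⁄dX ℝ (compoundPoissonTrunc lam f (n + 2)) =
      C (lam * b) * compoundPoissonTrunc lam f (n + 1) := by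
    rw [derivative_compoundPoissonTrunc_succ, smul_eq_C_mul, map_mul, ← hf']
    ring
  have hcoeff := congrArg (coeff n) hD
  rw [sub_mul, one_mul, mul_assoc, map_sub, coeff_C_mul, coeff_C_mul, coeff_derivative,
    coeff_X_mul_derivative, coeff_compoundPoissonTrunc_of_lt lam hf (by omega : n < n + 2)]
    at hcoeff
  rw [compoundPoissonCoeff, compoundPoissonCoeff]
  linear_combination hcoeff

noncomputable def logSeries (p : ℝ) : ℝ⟦X⟧ :=
  mk (logPMF p)

theorem logConvPow_eq_coeff_pow (p : ℝ) (j x : ℕ) :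
    logConvPow p j x = coeff x (logSeries p ^ j) := by
  induction j generalizing x with
  | zero => rw [logConvPow, pow_zero, coeff_one]
  | succ j ih =>
    rw [logConvPow, pow_succ, coeff_mul, Nat.sum_antidiagonal_eq_sum_range_succ_mk]
    simp only [ih, logSeries, coeff_mk]

theorem constantCoeff_logSeries (p : ℝ) : constantCoeff (logSeries p) = 0 := by
  rw [← coeff_zero_eq_constantCoeff_apply, logSeries, coeff_mk, logPMF, if_pos rfl]

theorem coeff_derivative_logSeries (p : ℝ) (n : ℕ) :
    coeff n (d⁄dX ℝ (logSeries p)) = -p ^ (n + 1) / Real.log (1 - p) := by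
  rw [coeff_derivative, logSeries, coeff_mk, logPMF, if_neg n.succ_ne_zero, Nat.cast_succ,
    mul_comm, ← mul_div_assoc, mul_div_mul_left _ _ n.cast_add_one_ne_zero]

theorem one_sub_mul_derivative_logSeries (p : ℝ) :
    (1 - C p * X) * d⁄dX ℝ (logSeries p) = C (-p / Real.log (1 - p)) := by
  ext n
  rw [sub_mul, one_mul, mul_assoc, map_sub, coeff_C_mul, coeff_C]
  cases n with
  | zero => simp [coeff_derivative_logSeries]
  | succ n =>
    rw [coeff_succ_X_mul, coeff_derivative_logSeries, coeff_derivative_logSeries,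
      if_neg n.succ_ne_zero]
    ring

theorem nbPMF_zero {r : ℝ} (hr : 0 < r) (p : ℝ) : nbPMF r p 0 = (1 - p) ^ r := by
  simp [nbPMF, (Real.Gamma_pos_of_pos hr).ne']

theorem nbPMF_succ {r : ℝ} (hr : 0 < r) (p : ℝ) (n : ℕ) :
    (n + 1) * nbPMF r p (n + 1) = p * (n + r) * nbPMF r p n := by
  have hGamma : Real.Gamma (((n + 1 : ℕ) : ℝ) + r) = (n + r) * Real.Gamma (n + r) := by
    rw [Nat.cast_succ, add_right_comm, Real.Gamma_add_one (by positivity)]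
  have hGr := (Real.Gamma_pos_of_pos hr).ne'
  rw [nbPMF, nbPMF, hGamma, Nat.factorial_succ, Nat.cast_mul, Nat.cast_succ, pow_succ]
  field_simp

/-- Compound-Poisson representation of the negative binomial distribution (pmf form):
with `λ = −r·log(1−p)`, for every `x ∈ ℕ`,
`Σ_{j=0}^{x} (e^{−λ} · λʲ / j!) · g_p^{*j}(x) = f_{r,p}(x)`.
(The sum may stop at `j = x` since `g_p^{*j}(x) = 0` for `j > x ≥ 1`.) -/
theorem negBinomial_eq_compound_poisson_log (r p : ℝ) (hr : 0 < r)
    (hp : p ∈ Set.Ioo (0:ℝ) 1) (x : ℕ) :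
    ∑ j ∈ Finset.range (x + 1),
        (Real.exp (-(-r * Real.log (1 - p))) * (-r * Real.log (1 - p)) ^ j /
            (j.factorial : ℝ)) * logConvPow p j x =
      nbPMF r p x := by
  obtain ⟨hp0, hp1⟩ := hp
  have hlog : Real.log (1 - p) ≠ 0 := (Real.log_neg (by linarith) (by linarith)).ne
  set lam := -r * Real.log (1 - p)
  have h0 : compoundPoissonCoeff lam (logSeries p) 0 = nbPMF r p 0 := by
    rw [compoundPoissonCoeff_zero, nbPMF_zero hr, Real.rpow_def_of_pos (by linarith)]
    congr 1
    ring
  have hrec (n : ℕ) : (n + 1) * compoundPoissonCoeff lam (logSeries p) (n + 1) =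
      p * (n + r) * compoundPoissonCoeff lam (logSeries p) n := by
    rw [compoundPoissonCoeff_succ (constantCoeff_logSeries p)
      (one_sub_mul_derivative_logSeries p)]
    field_simp
    ring
  rw [← congrFun (eq_of_succ_mul_recurrence h0 hrec (nbPMF_succ hr p)) x, compoundPoissonCoeff,
    compoundPoissonTrunc, map_sum]
  simp only [coeff_smul, logConvPow_eq_coeff_pow, poissonWeight, smul_eq_mul]
end
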